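/- arXiv:1511.04125 — 6 statements merged into one kernel-verified Lean document; each statement's English description precedes it below -/
import Mathlib

section
/- For a 4×4 symmetric matrix X over a field with p_2 = x_{22} ≠ 0, p_3 = x_{33} ≠ 0, and p_{23} = x_{23}² − x_{22}x_{33} ≠ 0, the entry x_{14} equals a_{14|23}/p_{23} + a_{12}a_{24|3}/(p_2 p_3) + a_{13|2}a_{34}/(p_2 p_3) + a_{12}a_{23}a_{34}/(p_2 p_3) + a_{13|2}a_{23}a_{24|3}/(p_2 p_{23} p_3). -/
/-- Five-term Catalan path formula for the entry `x₁₄` of a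
symmetric 4×4 matrix over a field (0-based indices; paper index `i`
corresponds to `i-1`).  Signed minors: `p₂ = x₂₂`, `p₃ = x₃₃`,
`p₂₃ = x₂₃² − x₂₂x₃₃`, `a₁₂ = x₁₂`, `a₂₃ = x₂₃`, `a₃₄ = x₃₄`,
`a₁₃|₂ = x₁₃x₂₂ − x₁₂x₂₃`, `a₂₄|₃ = x₂₄x₃₃ − x₂₃x₃₄`,
`a₁₄|₂₃ = (−1)·det` of the submatrix with rows `{1,2,3}` and columns
`{2,3,4}`. -/
theorem stmt4 {F : Type*} [Field F] (X : Matrix (Fin 4) (Fin 4) F)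
    (hsym : X.IsSymm) (h2 : X 1 1 ≠ 0) (h3 : X 2 2 ≠ 0)
    (h23 : (X 1 2) ^ 2 - X 1 1 * X 2 2 ≠ 0) :
    let p2 : F := X 1 1
    let p3 : F := X 2 2
    let p23 : F := (X 1 2) ^ 2 - X 1 1 * X 2 2
    let a12 : F := X 0 1
    let a23 : F := X 1 2
    let a34 : F := X 2 3
    let a132 : F := X 0 2 * X 1 1 - X 0 1 * X 1 2
    let a243 : F := X 1 3 * X 2 2 - X 1 2 * X 2 3
    let a1423 : F :=
      -Matrix.det (Matrix.of fun a b : Fin 3 => X (Fin.castSucc a) (Fin.succ b))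
    X 0 3 = a1423 / p23 + a12 * a243 / (p2 * p3) + a132 * a34 / (p2 * p3) +
      a12 * a23 * a34 / (p2 * p3) + a132 * a23 * a243 / (p2 * p23 * p3) := by
  intro p2 p3 p23 a12 a23 a34 a132 a243 a1423
  have h21 : X 2 1 = X 1 2 := hsym.apply 1 2
  have h32 : X 3 2 = X 2 3 := hsym.apply 2 3
  have h31 : X 3 1 = X 1 3 := hsym.apply 1 3
  simp only [p2, p3, p23, a12, a23, a34, a132, a243, a1423, Matrix.det_fin_three,
    Matrix.of_apply,
    show (Fin.castSucc 0 : Fin 4) = 0 from rfl, show (Fin.castSucc 1 : Fin 4) = 1 from rfl,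
    show (Fin.castSucc 2 : Fin 4) = 2 from rfl, show (Fin.succ 0 : Fin 4) = 1 from rfl,
    show (Fin.succ 1 : Fin 4) = 2 from rfl, show (Fin.succ 2 : Fin 4) = 3 from rfl,
    h21, h32, h31]
  set a := X 0 1; set b := X 0 2; set c := X 0 3
  set d := X 1 1; set e := X 1 2; set f := X 1 3
  set g := X 2 2; set i := X 2 3
  have hp : d * g ≠ 0 := mul_ne_zero h2 h3
  have h1 : (e ^ 2 - d * g) * (d * g) ≠ 0 := mul_ne_zero h23 hp
  have h4 : (e ^ 2 - d * g) * (d * g) * (d * g) ≠ 0 := mul_ne_zero h1 hp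
  have h5 : (e ^ 2 - d * g) * (d * g) * (d * g) * (d * g) ≠ 0 := mul_ne_zero h4 hp
  have h6 : d * (e ^ 2 - d * g) * g ≠ 0 :=
    mul_ne_zero (mul_ne_zero h2 h23) h3
  rw [div_add_div _ _ h23 hp, div_add_div _ _ h1 hp, div_add_div _ _ h4 hp,
    div_add_div _ _ h5 h6, eq_div_iff (mul_ne_zero h5 h6)]
  ring
end

section
/- The map Ψ : (−1,1)³ → {3×3 correlation matrices} sending (ρ_{12}, ρ_{23}, ρ_{13|2}) to the symmetric matrix Y with unit diagonal, y_{12} = ρ_{12}, y_{23} = ρ_{23}, and y_{13} = ρ_{12}ρ_{23} − ρ_{13|2}√(1−ρ_{12}²)√(1−ρ_{23}²), is well-defined (Y is positive definite) and a bijection onto the set of 3×3 correlation matrices. -/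
/-!
A symmetric matrix with unit diagonal and off-diagonal entries `a = y₁₂`, `b = y₂₃`, `y = y₁₃`
has determinant `(1 - a²)(1 - b²) - (ab - y)²`, and completing squares shows that it is positive
definite exactly when `a² < 1` and this determinant is positive. For `Ψ(ρ)` we have
`ab - y = ρ₁₃|₂ √(1 - a²) √(1 - b²)`, so the determinant is `(1 - a²)(1 - b²)(1 - ρ₁₃|₂²)`;
conversely `ρ₁₃|₂ = (ab - y) / (√(1 - a²) √(1 - b²))` recovers the parameter from the matrix.
-/

/-- A 3×3 correlation matrix: real symmetric positive definite with unit
diagonal.  (Over ℝ, `Matrix.PosDef` includes `IsHermitian`, i.e. symmetry.) -/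
def IsCorrelationMatrix3 (Y : Matrix (Fin 3) (Fin 3) ℝ) : Prop :=
  Y.PosDef ∧ ∀ i, Y i i = 1

/-- The map `Ψ` from parameters `(ρ₁₂, ρ₂₃, ρ₁₃|₂)` to the symmetric matrix
with unit diagonal, `y₁₂ = ρ₁₂`, `y₂₃ = ρ₂₃` and
`y₁₃ = ρ₁₂ρ₂₃ − ρ₁₃|₂·√(1−ρ₁₂²)·√(1−ρ₂₃²)`. -/
noncomputable def Psi3 (ρ : ℝ × ℝ × ℝ) : Matrix (Fin 3) (Fin 3) ℝ :=
  !![1, ρ.1, ρ.1 * ρ.2.1 - ρ.2.2 * Real.sqrt (1 - ρ.1 ^ 2) * Real.sqrt (1 - ρ.2.1 ^ 2);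
     ρ.1, 1, ρ.2.1;
     ρ.1 * ρ.2.1 - ρ.2.2 * Real.sqrt (1 - ρ.1 ^ 2) * Real.sqrt (1 - ρ.2.1 ^ 2), ρ.2.1, 1]

open Matrix Set

def unitDiagSymm3 (a b y : ℝ) : Matrix (Fin 3) (Fin 3) ℝ :=
  !![1, a, y; a, 1, b; y, b, 1]

lemma isHermitian_unitDiagSymm3 (a b y : ℝ) : (unitDiagSymm3 a b y).IsHermitian := by
  ext i j
  fin_cases i <;> fin_cases j <;> rfl

lemma det_unitDiagSymm3 (a b y : ℝ) :
    (unitDiagSymm3 a b y).det = (1 - a ^ 2) * (1 - b ^ 2) - (a * b - y) ^ 2 := by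
  simp only [unitDiagSymm3, det_fin_three, of_apply, cons_val', cons_val_zero, cons_val_one,
    cons_val, cons_val_fin_one]
  ring

-- Completing the square in `x 1`, then in `x 0`: the Schur complement of the leading 2×2 block
-- is `det / (1 - a ^ 2)`.
lemma mul_dotProduct_mulVec_unitDiagSymm3 (a b y : ℝ) (x : Fin 3 → ℝ) :
    (1 - a ^ 2) * (x ⬝ᵥ (unitDiagSymm3 a b y *ᵥ x)) =
      (1 - a ^ 2) * (a * x 0 + x 1 + b * x 2) ^ 2 + ((1 - a ^ 2) * x 0 - (a * b - y) * x 2) ^ 2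
        + (unitDiagSymm3 a b y).det * x 2 ^ 2 := by
  rw [det_unitDiagSymm3]
  simp only [unitDiagSymm3, dotProduct, mulVec, Fin.sum_univ_three, of_apply,
    cons_val', cons_val_zero, cons_val_one, cons_val, cons_val_fin_one]
  ring

lemma posDef_unitDiagSymm3_iff {a b y : ℝ} :
    (unitDiagSymm3 a b y).PosDef ↔ a ^ 2 < 1 ∧ 0 < (unitDiagSymm3 a b y).det := by
  constructor
  · intro h
    refine ⟨?_, h.det_pos⟩
    have := h.dotProduct_mulVec_pos (x := ![1, -a, 0]) (by simp)
    simp only [star_trivial, dotProduct, mulVec, unitDiagSymm3, Fin.sum_univ_three, of_apply,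
      cons_val', cons_val_zero, cons_val_one, cons_val, cons_val_fin_one] at this
    nlinarith
  · rintro ⟨ha, hdet⟩
    rw [← sub_pos] at ha
    refine .of_dotProduct_mulVec_pos (isHermitian_unitDiagSymm3 a b y) fun x hx => ?_
    refine pos_of_mul_pos_right ?_ ha.le
    rw [star_trivial, mul_dotProduct_mulVec_unitDiagSymm3]
    generalize 1 - a ^ 2 = s at ha ⊢
    generalize (unitDiagSymm3 a b y).det = d at hdet ⊢
    by_cases h2 : x 2 = 0
    · by_cases h0 : x 0 = 0
      · have h1 : x 1 ≠ 0 := fun h1 => hx (by ext i; fin_cases i <;> assumption)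
        simp only [h0, h2, mul_zero, add_zero, zero_add, sub_self]
        positivity
      · simp only [h2, mul_zero, add_zero, sub_zero]
        positivity
    · positivity

lemma isCorrelationMatrix3_unitDiagSymm3_iff {a b y : ℝ} :
    IsCorrelationMatrix3 (unitDiagSymm3 a b y) ↔ a ^ 2 < 1 ∧ 0 < (unitDiagSymm3 a b y).det := by
  rw [IsCorrelationMatrix3, posDef_unitDiagSymm3_iff, and_iff_left]
  intro i
  fin_cases i <;> rfl

lemma IsCorrelationMatrix3.eq_unitDiagSymm3 {Y : Matrix (Fin 3) (Fin 3) ℝ}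
    (hY : IsCorrelationMatrix3 Y) : Y = unitDiagSymm3 (Y 0 1) (Y 1 2) (Y 0 2) := by
  have hsym (i j : Fin 3) : Y j i = Y i j := hY.1.1.apply i j
  ext i j
  fin_cases i <;> fin_cases j <;> simp [unitDiagSymm3, hY.2, hsym 0 1, hsym 0 2, hsym 1 2]

lemma mem_Ioo_neg_one_one_iff_sq_lt_one {x : ℝ} : x ∈ Ioo (-1 : ℝ) 1 ↔ x ^ 2 < 1 := by
  rw [mem_Ioo, ← abs_lt, sq_lt_one_iff_abs_lt_one]

lemma Psi3_eq_unitDiagSymm3 (ρ : ℝ × ℝ × ℝ) :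
    Psi3 ρ = unitDiagSymm3 ρ.1 ρ.2.1
      (ρ.1 * ρ.2.1 - ρ.2.2 * √(1 - ρ.1 ^ 2) * √(1 - ρ.2.1 ^ 2)) := rfl

lemma det_Psi3 {a b : ℝ} (c : ℝ) (ha : a ^ 2 ≤ 1) (hb : b ^ 2 ≤ 1) :
    (Psi3 (a, b, c)).det = (1 - a ^ 2) * (1 - b ^ 2) * (1 - c ^ 2) := by
  rw [Psi3_eq_unitDiagSymm3, det_unitDiagSymm3, sub_sub_cancel, mul_pow, mul_pow,
    Real.sq_sqrt (sub_nonneg.2 ha), Real.sq_sqrt (sub_nonneg.2 hb)]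
  ring

theorem mapsTo_Psi3 :
    MapsTo Psi3 (Ioo (-1 : ℝ) 1 ×ˢ Ioo (-1 : ℝ) 1 ×ˢ Ioo (-1 : ℝ) 1)
      {Y | IsCorrelationMatrix3 Y} := by
  rintro ⟨a, b, c⟩ ⟨ha, hb, hc⟩
  simp only [mem_Ioo_neg_one_one_iff_sq_lt_one] at ha hb hc
  change IsCorrelationMatrix3 _
  rw [Psi3_eq_unitDiagSymm3, isCorrelationMatrix3_unitDiagSymm3_iff,
    ← Psi3_eq_unitDiagSymm3, det_Psi3 c ha.le hb.le]
  exact ⟨ha, mul_pos (mul_pos (sub_pos.2 ha) (sub_pos.2 hb)) (sub_pos.2 hc)⟩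

theorem injOn_Psi3 : InjOn Psi3 (Ioo (-1 : ℝ) 1 ×ˢ Ioo (-1 : ℝ) 1 ×ˢ Ioo (-1 : ℝ) 1) := by
  rintro ⟨a, b, c⟩ ⟨ha, hb, -⟩ ⟨a', b', c'⟩ - h
  rw [mem_Ioo_neg_one_one_iff_sq_lt_one, ← sub_pos] at ha hb
  obtain rfl : a = a' := congrFun (congrFun h 0) 1
  obtain rfl : b = b' := congrFun (congrFun h 1) 2
  have h02 : a * b - c * √(1 - a ^ 2) * √(1 - b ^ 2) = a * b - c' * √(1 - a ^ 2) * √(1 - b ^ 2) :=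
    congrFun (congrFun h 0) 2
  have hst : 0 < √(1 - a ^ 2) * √(1 - b ^ 2) := by positivity
  rw [sub_right_inj, mul_assoc, mul_assoc] at h02
  rw [mul_right_cancel₀ hst.ne' h02]

theorem surjOn_Psi3 :
    SurjOn Psi3 (Ioo (-1 : ℝ) 1 ×ˢ Ioo (-1 : ℝ) 1 ×ˢ Ioo (-1 : ℝ) 1)
      {Y | IsCorrelationMatrix3 Y} := by
  intro Y (hY : IsCorrelationMatrix3 Y)
  obtain ⟨a, b, y, rfl⟩ : ∃ a b y, Y = unitDiagSymm3 a b y := ⟨_, _, _, hY.eq_unitDiagSymm3⟩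
  obtain ⟨ha, hdet⟩ := isCorrelationMatrix3_unitDiagSymm3_iff.1 hY
  rw [det_unitDiagSymm3, sub_pos] at hdet
  have hab : 0 < (1 - a ^ 2) * (1 - b ^ 2) := (sq_nonneg _).trans_lt hdet
  have hb : b ^ 2 < 1 := sub_pos.1 (pos_of_mul_pos_right hab (sub_pos.2 ha).le)
  have hst_sq : (√(1 - a ^ 2) * √(1 - b ^ 2)) ^ 2 = (1 - a ^ 2) * (1 - b ^ 2) := by
    rw [mul_pow, Real.sq_sqrt (sub_pos.2 ha).le, Real.sq_sqrt (sub_pos.2 hb).le]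
  refine ⟨(a, b, (a * b - y) / (√(1 - a ^ 2) * √(1 - b ^ 2))), ?_, ?_⟩
  · simp only [mem_prod, mem_Ioo_neg_one_one_iff_sq_lt_one, div_pow, hst_sq]
    exact ⟨ha, hb, (div_lt_one hab).2 hdet⟩
  · rw [Psi3_eq_unitDiagSymm3]
    congr 1
    have hst : √(1 - a ^ 2) * √(1 - b ^ 2) ≠ 0 := by positivity
    rw [mul_assoc, div_mul_cancel₀ _ hst, sub_sub_cancel]

/-- `Ψ` is well-defined (maps into the correlation matrices)
and a bijection from the open cube `(−1,1)³` onto the set of 3×3 correlation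
matrices. -/
theorem stmt9 :
    Set.BijOn Psi3
      ((Set.Ioo (-1 : ℝ) 1) ×ˢ (Set.Ioo (-1 : ℝ) 1) ×ˢ (Set.Ioo (-1 : ℝ) 1))
      {Y | IsCorrelationMatrix3 Y} :=
  ⟨mapsTo_Psi3, injOn_Psi3, surjOn_Psi3⟩
end

section
/- For a symmetric positive definite matrix X and I = {i+1,...,j−1} with i < j, the signed principal minors satisfy a_{ij|I}² − p_{iI}·p_{jI} = p_I · p_{I∪{i,j}}, and, since the unsigned principal minors of X are positive, the sign of p_I·p_{I∪{i,j}} is (−1)^{⌊|I|/2⌋+⌊(|I|+2)/2⌋} = −1, so p_I·p_{I∪{i,j}} < 0; hence a_{ij|I}² < p_{iI}·p_{jI}. -/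
open Matrix


open Matrix

lemma posDef_submatrix {N m' : Type*} [Fintype N] [Fintype m'] [DecidableEq N] [DecidableEq m']
    {M : Matrix N N ℝ} (hM : M.PosDef) {e : m' → N} (he : Function.Injective e) :
    (M.submatrix e e).PosDef := by
  refine Matrix.PosDef.of_dotProduct_mulVec_pos ?_ ?_
  · have h := hM.1
    ext a b
    have := congrFun (congrFun h (e a)) (e b)
    simpa [Matrix.conjTranspose_apply] using this
  · intro x hx
    set y : N → ℝ := Function.extend e x 0 with hy
    have hy0 : y ≠ 0 := by
      intro h
      apply hx
      funext a
      have := congrFun h (e a)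
      simpa [hy, he.extend_apply] using this
    have hsupp : ∀ t : N, t ∉ Finset.image e Finset.univ → y t = 0 := by
      intro t ht
      have : t ∉ Set.range e := by
        rintro ⟨c, hc⟩; exact ht (Finset.mem_image.2 ⟨c, Finset.mem_univ c, hc⟩)
      simp [hy, Function.extend_apply' _ _ _ this]
    have key : dotProduct (star x) ((M.submatrix e e) *ᵥ x) = dotProduct (star y) (M *ᵥ y) := by
      classical
      simp only [dotProduct, mulVec, star_trivial]
      rw [← Finset.sum_subset (Finset.subset_univ ((Finset.univ : Finset m').image e))
        (fun t _ ht => by simp [hsupp t ht])]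
      rw [Finset.sum_image (fun a _ b _ h => he h)]
      refine Finset.sum_congr rfl fun a _ => ?_
      have hya : y (e a) = x a := by rw [hy]; exact he.extend_apply _ _ _
      rw [hya]
      congr 1
      rw [← Finset.sum_subset (Finset.subset_univ ((Finset.univ : Finset m').image e))
        (fun t _ ht => by simp [hsupp t ht])]
      rw [Finset.sum_image (fun a _ b _ h => he h)]
      refine Finset.sum_congr rfl fun b _ => ?_
      have hyb : y (e b) = x b := by rw [hy]; exact he.extend_apply _ _ _
      rw [submatrix_apply, hyb]
    rw [key]
    exact hM.dotProduct_mulVec_pos hy0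

open Matrix

lemma mul3_apply {k l k' l' : Type*} [Fintype l] [Fintype k'] [DecidableEq l] [DecidableEq k']
    (B : Matrix k l ℝ) (E : Matrix l k' ℝ) (C : Matrix k' l' ℝ) (p : k) (q : l') :
    (B * E * C) p q = (fun t => B p t) ⬝ᵥ E *ᵥ (fun t => C t q) := by
  simp only [Matrix.mul_apply, dotProduct, Matrix.mulVec, Finset.sum_mul, Finset.mul_sum,
    dotProduct]
  rw [Finset.sum_comm]
  refine Finset.sum_congr rfl fun s _ => Finset.sum_congr rfl fun t _ => by ring

lemma det_block1 {m : ℕ} (a : ℝ) (u v : Fin m → ℝ) (D : Matrix (Fin m) (Fin m) ℝ)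
    [Invertible D] :
    (Matrix.fromBlocks (Matrix.of fun _ _ : Fin 1 => a) (Matrix.of fun _ k => u k)
      (Matrix.of fun k _ => v k) D).det = D.det * (a - u ⬝ᵥ (⅟D) *ᵥ v) := by
  rw [Matrix.det_fromBlocks₂₂]
  congr 1
  rw [Matrix.det_fin_one, Matrix.sub_apply, mul3_apply]
  simp [dotProduct]

lemma det_block2 {m : ℕ} (a b c d : ℝ) (u v u' v' : Fin m → ℝ)
    (D : Matrix (Fin m) (Fin m) ℝ) [Invertible D] :
    (Matrix.fromBlocks (Matrix.of ![![a, b], ![c, d]]) (Matrix.of ![u, v])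
      (Matrix.of fun t => ![u' t, v' t]) D).det
    = D.det * ((a - u ⬝ᵥ (⅟D) *ᵥ u') * (d - v ⬝ᵥ (⅟D) *ᵥ v')
        - (b - u ⬝ᵥ (⅟D) *ᵥ v') * (c - v ⬝ᵥ (⅟D) *ᵥ u')) := by
  rw [Matrix.det_fromBlocks₂₂]
  congr 1
  rw [Matrix.det_fin_two]
  simp only [Matrix.sub_apply, mul3_apply, Matrix.of_apply, Matrix.cons_val_zero,
    Matrix.cons_val_one, Matrix.head_cons]

open Matrix

/-- `Fin.cons` of a strictly monotone map below which `a` sits is strictly monotone. -/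
lemma strictMono_fin_cons {m : ℕ} {α : Type*} [Preorder α] {f : Fin m → α} {a : α}
    (hf : StrictMono f) (ha : ∀ k, a < f k) : StrictMono (Fin.cons a f : Fin (m + 1) → α) := by
  intro x y hxy
  induction y using Fin.cases with
  | zero => exact absurd hxy (by simp [Fin.lt_iff_val_lt_val])
  | succ y =>
    induction x using Fin.cases with
    | zero => simpa using ha y
    | succ x => simpa using hf (by simpa [Fin.succ_lt_succ_iff] using hxy)

lemma strictMono_fin_snoc {m : ℕ} {α : Type*} [Preorder α] {f : Fin m → α} {a : α}
    (hf : StrictMono f) (ha : ∀ k, f k < a) : StrictMono (Fin.snoc f a : Fin (m + 1) → α) := by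
  intro x y hxy
  induction x using Fin.lastCases with
  | last => exact absurd hxy (by simp [Fin.lt_iff_val_lt_val]; omega)
  | cast x =>
    induction y using Fin.lastCases with
    | last => simpa using ha x
    | cast y => simpa using hf (by simpa [Fin.castSucc_lt_castSucc_iff] using hxy)

def eqv1 (m : ℕ) : Fin 1 ⊕ Fin m ≃ Fin (m + 1) where
  toFun := Sum.elim (fun _ => 0) Fin.succ
  invFun := Fin.cases (Sum.inl 0) Sum.inr
  left_inv := by
    rintro (x | x)
    · simp [Subsingleton.elim x (0 : Fin 1)]
    · simp
  right_inv := by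
    intro x
    induction x using Fin.cases <;> simp

def eqv2 (m : ℕ) : Fin 1 ⊕ Fin m ≃ Fin (m + 1) where
  toFun := Sum.elim (fun _ => Fin.last m) Fin.castSucc
  invFun := Fin.lastCases (Sum.inl 0) Sum.inr
  left_inv := by
    rintro (x | x)
    · simp [Subsingleton.elim x (0 : Fin 1)]
    · simp
  right_inv := by
    intro x
    induction x using Fin.lastCases <;> simp

def eqv3 (m : ℕ) : Fin 2 ⊕ Fin m ≃ Fin (m + 2) where
  toFun := Sum.elim ![0, Fin.last (m + 1)] fun k => k.succ.castSucc
  invFun := Fin.cases (Sum.inl 0) (fun s => Fin.lastCases (Sum.inl 1) Sum.inr s)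
  left_inv := by
    rintro (x | x)
    · fin_cases x
      · simp
      · simp [← Fin.succ_last]
    · simp [← Fin.succ_castSucc]
  right_inv := by
    intro x
    induction x using Fin.cases with
    | zero => simp
    | succ s =>
      induction s using Fin.lastCases with
      | last => simp [← Fin.succ_last]
      | cast k => simp [← Fin.succ_castSucc]


/-- The determinant of the submatrix of `X` with row indices `S` and column
indices `T` (each taken in increasing order), where `S` and `T` both have
cardinality `k`. -/
def minorDet {n k : ℕ} (X : Matrix (Fin n) (Fin n) ℝ) (S T : Finset (Fin n))
    (hS : S.card = k) (hT : T.card = k) : ℝ :=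
  Matrix.det (Matrix.of fun a b : Fin k =>
    X (S.orderIsoOfFin hS a) (T.orderIsoOfFin hT b))

lemma minorDet_eq {n k : ℕ} (X : Matrix (Fin n) (Fin n) ℝ) (S T : Finset (Fin n))
    (hS : S.card = k) (hT : T.card = k) (f g : Fin k → Fin n)
    (hf : ⇑(S.orderEmbOfFin hS) = f) (hg : ⇑(T.orderEmbOfFin hT) = g) :
    minorDet X S T hS hT = (X.submatrix f g).det := by
  unfold minorDet
  congr 1
  ext a b
  rw [Matrix.of_apply, Matrix.submatrix_apply, Finset.coe_orderIsoOfFin_apply,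
    Finset.coe_orderIsoOfFin_apply, hf, hg]

lemma key_ineq (dd s0 s1 s2 : ℝ) (hdd : 0 < dd) (h : 0 < dd * (s0 * s1 - s2 * s2)) :
    (dd * s2) ^ 2 < dd * s0 * (dd * s1) := by nlinarith [mul_pos hdd h]

set_option maxHeartbeats 1000000 in
/-- For a real symmetric positive definite matrix `X` and
`I = {i+1,…,j−1}` with `i < j` (here `I = Finset.Ioo i j`), the signed minors
`p_S = (−1)^⌊|S|/2⌋ X_S^S` and `a_{ij|I} = (−1)^⌈|I|/2⌉ X_{iI}^{jI}` satisfy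
the identity `a_{ij|I}² − p_{iI}·p_{jI} = p_I·p_{I∪{i,j}}`, and since unsigned
principal minors of a positive definite matrix are positive and the sign of
`p_I·p_{I∪{i,j}}` is `−1`, it follows that `a_{ij|I}² < p_{iI}·p_{jI}`. -/
theorem stmt12 {n : ℕ} (X : Matrix (Fin n) (Fin n) ℝ) (hX : X.PosDef)
    (i j : Fin n) (hij : i < j) :
    let I : Finset (Fin n) := Finset.Ioo i j
    let aijI : ℝ := (-1) ^ ((I.card + 1) / 2) *
      minorDet X (insert i I) (insert j I)
        (Finset.card_insert_of_notMem (show i ∉ Finset.Ioo i j by simp))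
        (Finset.card_insert_of_notMem (show j ∉ Finset.Ioo i j by simp))
    let pI : ℝ := (-1) ^ (I.card / 2) * minorDet X I I rfl rfl
    let piI : ℝ := (-1) ^ ((I.card + 1) / 2) *
      minorDet X (insert i I) (insert i I)
        (Finset.card_insert_of_notMem (show i ∉ Finset.Ioo i j by simp))
        (Finset.card_insert_of_notMem (show i ∉ Finset.Ioo i j by simp))
    let pjI : ℝ := (-1) ^ ((I.card + 1) / 2) *
      minorDet X (insert j I) (insert j I)
        (Finset.card_insert_of_notMem (show j ∉ Finset.Ioo i j by simp))
        (Finset.card_insert_of_notMem (show j ∉ Finset.Ioo i j by simp))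
    let pIij : ℝ := (-1) ^ ((I.card + 2) / 2) *
      minorDet X (insert i (insert j I)) (insert i (insert j I))
        (show (insert i (insert j (Finset.Ioo i j))).card = (Finset.Ioo i j).card + 2 by
          rw [Finset.card_insert_of_notMem (by simp [hij.ne]),
            Finset.card_insert_of_notMem (by simp)])
        (show (insert i (insert j (Finset.Ioo i j))).card = (Finset.Ioo i j).card + 2 by
          rw [Finset.card_insert_of_notMem (by simp [hij.ne]),
            Finset.card_insert_of_notMem (by simp)])
    aijI ^ 2 - piI * pjI = pI * pIij ∧ aijI ^ 2 < piI * pjI := by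
  intro I aijI pI piI pjI pIij
  classical
  have hXs : ∀ p q, X q p = X p q := fun p q => by
    have := congrFun (congrFun hX.1 p) q
    simpa using this
  set m := I.card with hmdef
  -- the increasing enumeration of I
  set e : Fin m ↪o Fin n := I.orderEmbOfFin rfl with hedef
  have he_mem : ∀ k, e k ∈ Finset.Ioo i j := fun k => I.orderEmbOfFin_mem rfl k
  have hei : ∀ k, i < e k := fun k => (Finset.mem_Ioo.1 (he_mem k)).1
  have hej : ∀ k, e k < j := fun k => (Finset.mem_Ioo.1 (he_mem k)).2
  -- enumerations of the extended sets
  have hmem_iI : ∀ t : Fin (m + 1), (Fin.cons i ⇑e : Fin (m+1) → Fin n) t ∈ insert i I := by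
    intro t
    induction t using Fin.cases with
    | zero => simp
    | succ k => exact Finset.mem_insert_of_mem (he_mem k)
  have hstrict_iI : StrictMono (Fin.cons i ⇑e : Fin (m+1) → Fin n) :=
    strictMono_fin_cons e.strictMono hei
  have hg : ∀ (p : (insert i I).card = m + 1),
      ⇑((insert i I).orderEmbOfFin p) = Fin.cons i ⇑e :=
    fun p => (Finset.orderEmbOfFin_unique p hmem_iI hstrict_iI).symm
  have hmem_jI : ∀ t : Fin (m + 1), (Fin.snoc ⇑e j : Fin (m+1) → Fin n) t ∈ insert j I := by
    intro t
    induction t using Fin.lastCases with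
    | last => simp
    | cast k => exact Finset.mem_insert_of_mem (by rw [Fin.snoc_castSucc]; exact he_mem k)
  have hstrict_jI : StrictMono (Fin.snoc ⇑e j : Fin (m+1) → Fin n) :=
    strictMono_fin_snoc e.strictMono hej
  have hh : ∀ (p : (insert j I).card = m + 1),
      ⇑((insert j I).orderEmbOfFin p) = Fin.snoc ⇑e j :=
    fun p => (Finset.orderEmbOfFin_unique p hmem_jI hstrict_jI).symm
  have hmem_f : ∀ t : Fin (m + 2), (Fin.cons i (Fin.snoc ⇑e j : Fin (m+1) → Fin n) : Fin (m+2) → Fin n) t ∈ insert i (insert j I) := by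
    intro t
    induction t using Fin.cases with
    | zero => simp
    | succ k => exact Finset.mem_insert_of_mem (by simpa using hmem_jI k)
  have hstrict_f : StrictMono (Fin.cons i (Fin.snoc ⇑e j) : Fin (m+2) → Fin n) := by
    refine strictMono_fin_cons hstrict_jI ?_
    intro k
    induction k using Fin.lastCases with
    | last => simpa using hij
    | cast k => simpa using hei k
  have hf : ∀ (p : (insert i (insert j I)).card = m + 2),
      ⇑((insert i (insert j I)).orderEmbOfFin p) = Fin.cons i (Fin.snoc ⇑e j) :=
    fun p => (Finset.orderEmbOfFin_unique p hmem_f hstrict_f).symm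
  -- data
  set D : Matrix (Fin m) (Fin m) ℝ := X.submatrix ⇑e ⇑e with hD
  have hDpd : D.PosDef := posDef_submatrix hX e.injective
  have hDdet : 0 < D.det := hDpd.det_pos
  haveI : Invertible D := D.invertibleOfIsUnitDet hDdet.ne'.isUnit
  have hDsymmT : Dᵀ = D := by
    ext p q
    simp [hD, hXs]
  have hiD : (⅟D)ᵀ = ⅟D := by
    rw [Matrix.invOf_eq_nonsing_inv, Matrix.transpose_nonsing_inv, hDsymmT]
  set u : Fin m → ℝ := fun k => X i (e k) with hu
  set v : Fin m → ℝ := fun k => X j (e k) with hv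
  have huv : u ⬝ᵥ (⅟D) *ᵥ v = v ⬝ᵥ (⅟D) *ᵥ u := by
    rw [Matrix.dotProduct_mulVec, ← hiD, Matrix.vecMul_transpose, dotProduct_comm, hiD]
  set s00 : ℝ := X i i - u ⬝ᵥ (⅟D) *ᵥ u with hs00
  set s11 : ℝ := X j j - v ⬝ᵥ (⅟D) *ᵥ v with hs11
  set s01 : ℝ := X i j - u ⬝ᵥ (⅟D) *ᵥ v with hs01
  -- the small minor
  have h0 : minorDet X I I rfl rfl = D.det := by
    rw [minorDet_eq X I I rfl rfl ⇑e ⇑e rfl rfl]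
  -- the iI principal minor
  have h1 : ∀ (hS hT : (insert i I).card = m + 1), minorDet X (insert i I) (insert i I) hS hT = D.det * s00 := by
    intro hS hT
    rw [minorDet_eq X _ _ hS hT _ _ (hg hS) (hg hT),
      ← Matrix.det_submatrix_equiv_self (eqv1 m)]
    have : (X.submatrix (Fin.cons i ⇑e) (Fin.cons i ⇑e)).submatrix (eqv1 m) (eqv1 m)
        = Matrix.fromBlocks (Matrix.of fun _ _ : Fin 1 => X i i) (Matrix.of fun _ k => u k)
          (Matrix.of fun k _ => u k) D := by
      ext x y
      rcases x with x | x <;> rcases y with y | y <;>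
        simp [eqv1, hu, hD, hXs]
    rw [this, det_block1]
  -- the jI principal minor
  have h2 : ∀ (hS : (insert j I).card = m + 1) (hT : (insert j I).card = m + 1), minorDet X (insert j I) (insert j I) hS hT = D.det * s11 := by
    intro hS hT
    rw [minorDet_eq X _ _ hS hT _ _ (hh hS) (hh hT),
      ← Matrix.det_submatrix_equiv_self (eqv2 m)]
    have : (X.submatrix (Fin.snoc ⇑e j) (Fin.snoc ⇑e j)).submatrix (eqv2 m) (eqv2 m)
        = Matrix.fromBlocks (Matrix.of fun _ _ : Fin 1 => X j j) (Matrix.of fun _ k => v k)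
          (Matrix.of fun k _ => v k) D := by
      ext x y
      rcases x with x | x <;> rcases y with y | y <;>
        simp [eqv2, hv, hD, hXs]
    rw [this, det_block1]
  -- the mixed minor, squared
  have h3 : ∀ (hS : (insert i I).card = m + 1) (hT : (insert j I).card = m + 1), (minorDet X (insert i I) (insert j I) hS hT) ^ 2
      = (D.det * s01) ^ 2 := by
    intro hS hT
    rw [minorDet_eq X _ _ hS hT _ _ (hg hS) (hh hT)]
    set M₁ := X.submatrix (Fin.cons i ⇑e) (Fin.snoc ⇑e j) with hM₁
    set π : Equiv.Perm (Fin 1 ⊕ Fin m) := (eqv2 m).trans (eqv1 m).symm with hπ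
    have hperm : M₁.submatrix ⇑(eqv1 m) ⇑(eqv2 m)
        = (M₁.submatrix ⇑(eqv1 m) ⇑(eqv1 m)).submatrix id ⇑π := by
      ext x y
      simp [hπ]
    have hblk : M₁.submatrix ⇑(eqv1 m) ⇑(eqv2 m)
        = Matrix.fromBlocks (Matrix.of fun _ _ : Fin 1 => X i j) (Matrix.of fun _ k => u k)
          (Matrix.of fun k _ => v k) D := by
      ext x y
      rcases x with x | x <;> rcases y with y | y <;>
        simp [eqv1, eqv2, hM₁, hu, hv, hD, hXs]
    have hsign : ((Equiv.Perm.sign π : ℤ) : ℝ) * ((Equiv.Perm.sign π : ℤ) : ℝ) = 1 := by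
      rw [← Int.cast_mul, ← Units.val_mul, Int.units_mul_self, Units.val_one, Int.cast_one]
    have hdets : D.det * s01 = ((Equiv.Perm.sign π : ℤ) : ℝ) * M₁.det := by
      rw [← det_block1 (X i j) u v D, ← hblk, hperm, Matrix.det_permute',
        Matrix.det_submatrix_equiv_self]
    have hsq1 : ((Equiv.Perm.sign π : ℤ) : ℝ) ^ 2 = 1 := by rw [sq, hsign]
    have : (D.det * s01) ^ 2 = M₁.det ^ 2 := by
      rw [hdets, mul_pow, hsq1, one_mul]
    rw [this]
  -- the full minor
  have hfull : (X.submatrix (Fin.cons i (Fin.snoc ⇑e j)) (Fin.cons i (Fin.snoc ⇑e j))).det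
      = D.det * (s00 * s11 - s01 * s01) := by
    rw [← Matrix.det_submatrix_equiv_self (eqv3 m)]
    have : (X.submatrix (Fin.cons i (Fin.snoc ⇑e j)) (Fin.cons i (Fin.snoc ⇑e j))).submatrix
          (eqv3 m) (eqv3 m)
        = Matrix.fromBlocks (Matrix.of ![![X i i, X i j], ![X i j, X j j]])
            (Matrix.of ![u, v]) (Matrix.of fun t => ![u t, v t]) D := by
      ext x y
      rcases x with x | x <;> rcases y with y | y
      · fin_cases x <;> fin_cases y <;>
          simp [eqv3, ← Fin.succ_last, hXs]
      · fin_cases x <;>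
          simp [eqv3, ← Fin.succ_last, ← Fin.succ_castSucc, hu, hv, hXs]
      · fin_cases y <;>
          simp [eqv3, ← Fin.succ_last, ← Fin.succ_castSucc, hu, hv, hXs]
      · simp [eqv3, ← Fin.succ_castSucc, hD]
    rw [this, det_block2, hs00, hs11, hs01, huv]
  have h4 : ∀ (hS hT : (insert i (insert j I)).card = m + 2),
      minorDet X (insert i (insert j I)) (insert i (insert j I)) hS hT
      = D.det * (s00 * s11 - s01 * s01) := by
    intro hS hT
    rw [minorDet_eq X _ _ hS hT _ _ (hf hS) (hf hT)]
    exact hfull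
  -- positivity of the full minor
  have h5 : 0 < D.det * (s00 * s11 - s01 * s01) := by
    rw [← hfull]
    exact (posDef_submatrix hX hstrict_f.injective).det_pos
  -- sign bookkeeping
  have hsq : ∀ k : ℕ, ((-1 : ℝ) ^ k) ^ 2 = 1 := fun k => by
    rw [← pow_mul, mul_comm, pow_mul, neg_one_sq, one_pow]
  have hpow : (-1 : ℝ) ^ (m / 2) * (-1 : ℝ) ^ ((m + 2) / 2) = -1 := by
    have hd : (m + 2) / 2 = m / 2 + 1 := Nat.add_div_right m (by norm_num)
    rw [hd, pow_succ]
    have : (-1 : ℝ) ^ (m / 2) * ((-1 : ℝ) ^ (m / 2) * -1) = -(((-1 : ℝ) ^ (m / 2)) ^ 2) := by ring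
    rw [this, hsq]
  -- unfold the `let`s
  have haij : aijI ^ 2 = (D.det * s01) ^ 2 := by
    show ((-1 : ℝ) ^ ((I.card + 1)/2) * minorDet X (insert i I) (insert j I) _ _) ^ 2 = _
    rw [mul_pow, hsq, one_mul, h3]
  have hpiI : piI = (-1 : ℝ) ^ ((m + 1)/2) * (D.det * s00) := by
    show (-1 : ℝ) ^ ((I.card + 1)/2) * minorDet X (insert i I) (insert i I) _ _ = _
    rw [h1]
  have hpjI : pjI = (-1 : ℝ) ^ ((m + 1)/2) * (D.det * s11) := by
    show (-1 : ℝ) ^ ((I.card + 1)/2) * minorDet X (insert j I) (insert j I) _ _ = _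
    rw [h2]
  have hpI : pI = (-1 : ℝ) ^ (m/2) * D.det := by
    show (-1 : ℝ) ^ (I.card/2) * minorDet X I I rfl rfl = _
    rw [h0]
  have hpIij : pIij = (-1 : ℝ) ^ ((m + 2)/2) * (D.det * (s00 * s11 - s01 * s01)) := by
    show (-1 : ℝ) ^ ((I.card + 2)/2) *
      minorDet X (insert i (insert j I)) (insert i (insert j I)) _ _ = _
    rw [h4]
  have hmul : piI * pjI = D.det * s00 * (D.det * s11) := by
    rw [hpiI, hpjI]
    calc (-1 : ℝ) ^ ((m + 1)/2) * (D.det * s00) * ((-1 : ℝ) ^ ((m + 1)/2) * (D.det * s11))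
        = ((-1 : ℝ) ^ ((m + 1)/2)) ^ 2 * (D.det * s00 * (D.det * s11)) := by ring
      _ = D.det * s00 * (D.det * s11) := by rw [hsq, one_mul]
  have hprod : pI * pIij = -(D.det * (D.det * (s00 * s11 - s01 * s01))) := by
    rw [hpI, hpIij]
    calc (-1 : ℝ) ^ (m/2) * D.det *
          ((-1 : ℝ) ^ ((m + 2)/2) * (D.det * (s00 * s11 - s01 * s01)))
        = ((-1 : ℝ) ^ (m/2) * (-1 : ℝ) ^ ((m + 2)/2)) *
          (D.det * (D.det * (s00 * s11 - s01 * s01))) := by ring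
      _ = -(D.det * (D.det * (s00 * s11 - s01 * s01))) := by rw [hpow]; ring
  constructor
  · rw [haij, hmul, hprod]
    ring
  · rw [haij, hmul]
    exact key_ineq D.det s00 s11 s01 hDdet h5
end

section
/- The generating function for Schröder numbers: if s_k denotes the number of lattice paths from (0,0) to (2k,0) with steps (1,1), (1,−1), (2,0) staying weakly above the x-axis, then s_0 = 1, s_1 = 2, s_2 = 6, s_3 = 22, s_4 = 90, and the s_k satisfy the recurrence s_{k+1} = s_k + ∑_{i=0}^{k} s_i·s_{k−i} (equivalently (k+2)s_{k+1} = 3(2k+1)s_k − (k−1)s_{k−1}). -/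
/-!
A Schröder path of positive semilength either starts with a horizontal step, followed by a path
of semilength `k`, or it is `U A D B`, where `D` is its first return to the axis and `A`, `B` are
paths of semilengths `i` and `k - i`. This bijection gives the recurrence, and the initial values
follow from it and `s₀ = 1`.
-/

/-- Horizontal displacement of the three Schröder steps:
`0` = northeast `(1,1)`, `1` = southeast `(1,−1)`, `2` = horizontal `(2,0)`. -/
def schroderDx : Fin 3 → ℕ := ![1, 1, 2]

/-- Vertical displacement of the three Schröder steps. -/
def schroderDy : Fin 3 → ℤ := ![1, -1, 0]

/-- A Schröder path of semilength `k`: a list of steps going from `(0,0)` to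
`(2k,0)`, never going below the x-axis. -/
def IsSchroderPath (k : ℕ) (l : List (Fin 3)) : Prop :=
  (l.map schroderDx).sum = 2 * k ∧ (l.map schroderDy).sum = 0 ∧
    ∀ m : ℕ, 0 ≤ ((l.take m).map schroderDy).sum

/-- The `k`-th large Schröder number: the number of Schröder paths of
semilength `k`. -/
noncomputable def schroderNum (k : ℕ) : ℕ :=
  Nat.card {l : List (Fin 3) // IsSchroderPath k l}

@[simp] lemma schroderDx_zero : schroderDx 0 = 1 := rfl
@[simp] lemma schroderDx_one : schroderDx 1 = 1 := rfl
@[simp] lemma schroderDx_two : schroderDx 2 = 2 := rfl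
@[simp] lemma schroderDy_zero : schroderDy 0 = 1 := rfl
@[simp] lemma schroderDy_one : schroderDy 1 = -1 := rfl
@[simp] lemma schroderDy_two : schroderDy 2 = 0 := rfl

namespace Schroder

def width (l : List (Fin 3)) : ℕ := (l.map schroderDx).sum

def height (l : List (Fin 3)) : ℤ := (l.map schroderDy).sum

@[simp] lemma width_nil : width [] = 0 := rfl

@[simp] lemma width_cons (a : Fin 3) (l : List (Fin 3)) :
    width (a :: l) = schroderDx a + width l := by
  simp [width]

@[simp] lemma width_append (l₁ l₂ : List (Fin 3)) : width (l₁ ++ l₂) = width l₁ + width l₂ := by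
  simp [width]

@[simp] lemma height_nil : height [] = 0 := rfl

@[simp] lemma height_cons (a : Fin 3) (l : List (Fin 3)) :
    height (a :: l) = schroderDy a + height l := by
  simp [height]

@[simp] lemma height_append (l₁ l₂ : List (Fin 3)) :
    height (l₁ ++ l₂) = height l₁ + height l₂ := by
  simp [height]

lemma length_le_width (l : List (Fin 3)) : l.length ≤ width l := by
  induction l with
  | nil => rfl
  | cons a l ih =>
    have : 1 ≤ schroderDx a := by revert a; decide
    simp only [List.length_cons, width_cons]
    omega

lemma even_width_sub_height (l : List (Fin 3)) : Even ((width l : ℤ) - height l) := by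
  induction l with
  | nil => simp
  | cons a l ih =>
    have ha : Even ((schroderDx a : ℤ) - schroderDy a) := by revert a; decide
    have hsplit : ((width (a :: l) : ℕ) : ℤ) - height (a :: l) =
        ((schroderDx a : ℤ) - schroderDy a) + ((width l : ℤ) - height l) := by
      push_cast [width_cons, height_cons]
      ring
    exact hsplit ▸ ha.add ih

lemma even_width_of_height_eq_zero {l : List (Fin 3)} (h : height l = 0) : Even (width l) := by
  simpa [h] using even_width_sub_height l

def StaysNonnegFrom (c : ℤ) (l : List (Fin 3)) : Prop :=
  ∀ m, 0 ≤ c + height (l.take m)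

lemma StaysNonnegFrom.nonneg {c : ℤ} {l : List (Fin 3)} (h : StaysNonnegFrom c l) : 0 ≤ c := by
  simpa using h 0

lemma StaysNonnegFrom.mono {c c' : ℤ} {l : List (Fin 3)} (h : StaysNonnegFrom c l) (hc : c ≤ c') :
    StaysNonnegFrom c' l :=
  fun m => (h m).trans (by omega)

@[simp] lemma staysNonnegFrom_nil {c : ℤ} : StaysNonnegFrom c [] ↔ 0 ≤ c := by
  simp [StaysNonnegFrom]

@[simp] lemma staysNonnegFrom_cons {c : ℤ} {a : Fin 3} {l : List (Fin 3)} :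
    StaysNonnegFrom c (a :: l) ↔ 0 ≤ c ∧ StaysNonnegFrom (c + schroderDy a) l := by
  refine ⟨fun h => ⟨h.nonneg, fun m => ?_⟩, fun ⟨hc, h⟩ m => ?_⟩
  · simpa [add_assoc] using h (m + 1)
  · cases m with
    | zero => simpa using hc
    | succ m => simpa [add_assoc] using h m

lemma staysNonnegFrom_append {c : ℤ} {l₁ l₂ : List (Fin 3)} :
    StaysNonnegFrom c (l₁ ++ l₂) ↔ StaysNonnegFrom c l₁ ∧ StaysNonnegFrom (c + height l₁) l₂ := by
  induction l₁ generalizing c with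
  | nil =>
    exact ⟨fun h => ⟨staysNonnegFrom_nil.2 h.nonneg, by simpa using h⟩, fun h => by simpa using h.2⟩
  | cons a l ih => simp [ih, add_assoc, and_assoc]

lemma exists_eq_append_down_of_add_height_neg {c : ℤ} (hc : 0 ≤ c) {t : List (Fin 3)}
    (ht : c + height t < 0) :
    ∃ A B, t = A ++ 1 :: B ∧ StaysNonnegFrom c A ∧ c + height A = 0 := by
  induction t generalizing c with
  | nil => rw [height_nil] at ht; omega
  | cons a t ih =>
    by_cases hca : 0 ≤ c + schroderDy a
    · obtain ⟨A, B, rfl, hA, hAh⟩ := ih hca (by rw [height_cons] at ht; linarith)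
      exact ⟨a :: A, B, rfl, staysNonnegFrom_cons.2 ⟨hc, hA⟩, by rw [height_cons]; linarith⟩
    · obtain ⟨rfl, rfl⟩ : c = 0 ∧ a = 1 := by
        fin_cases a <;> simp at hca ⊢ <;> omega
      exact ⟨[], t, rfl, by simp, by simp⟩

end Schroder

open Schroder

lemma isSchroderPath_iff {k : ℕ} {l : List (Fin 3)} :
    IsSchroderPath k l ↔ width l = 2 * k ∧ height l = 0 ∧ StaysNonnegFrom 0 l := by
  simp [IsSchroderPath, StaysNonnegFrom, width, height]

lemma isSchroderPath_zero_iff {l : List (Fin 3)} : IsSchroderPath 0 l ↔ l = [] := by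
  refine ⟨fun h => ?_, fun h => by simp [h, isSchroderPath_iff]⟩
  have := length_le_width l
  rw [(isSchroderPath_iff.1 h).1] at this
  exact List.eq_nil_of_length_eq_zero (by omega)

lemma not_isSchroderPath_cons_one (k : ℕ) (l : List (Fin 3)) : ¬ IsSchroderPath k (1 :: l) := by
  intro h
  have := (staysNonnegFrom_cons.1 (isSchroderPath_iff.1 h).2.2).2.nonneg
  simp at this

lemma isSchroderPath_cons_two {k : ℕ} {l : List (Fin 3)} :
    IsSchroderPath (k + 1) (2 :: l) ↔ IsSchroderPath k l := by
  have hw (w : ℕ) : 2 + w = 2 * (k + 1) ↔ w = 2 * k := by omega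
  simp only [isSchroderPath_iff, width_cons, height_cons, staysNonnegFrom_cons, schroderDx_two,
    schroderDy_two, zero_add, add_zero, le_refl, true_and, hw]

lemma IsSchroderPath.up_append_down {i j : ℕ} {A B : List (Fin 3)}
    (hA : IsSchroderPath i A) (hB : IsSchroderPath j B) :
    IsSchroderPath (i + j + 1) (0 :: (A ++ 1 :: B)) := by
  rw [isSchroderPath_iff] at *
  obtain ⟨hA₁, hA₂, hA₃⟩ := hA
  obtain ⟨hB₁, hB₂, hB₃⟩ := hB
  refine ⟨?_, ?_, ?_⟩
  · simp only [width_cons, width_append, schroderDx_zero, schroderDx_one, hA₁, hB₁]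
    ring
  · simp [hA₂, hB₂]
  · simp [hA₂, hA₃.mono zero_le_one, hB₃, staysNonnegFrom_append]

lemma IsSchroderPath.exists_eq_append_down {k : ℕ} {t : List (Fin 3)}
    (h : IsSchroderPath (k + 1) (0 :: t)) :
    ∃ i ≤ k, ∃ A B, t = A ++ 1 :: B ∧ IsSchroderPath i A ∧ IsSchroderPath (k - i) B := by
  obtain ⟨hw, hh, hs⟩ := isSchroderPath_iff.1 h
  simp only [width_cons, height_cons, staysNonnegFrom_cons, schroderDx_zero, schroderDy_zero]
    at hw hh hs
  obtain ⟨A, B, rfl, hA, hAh⟩ := exists_eq_append_down_of_add_height_neg le_rfl (t := t)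
    (by omega)
  rw [zero_add] at hAh
  obtain ⟨i, hi⟩ := even_width_of_height_eq_zero hAh
  simp only [width_append, width_cons, schroderDx_one, height_append, height_cons, schroderDy_one,
    hAh, staysNonnegFrom_append, staysNonnegFrom_cons] at hw hh hs
  exact ⟨i, by omega, A, B, rfl, isSchroderPath_iff.2 ⟨by omega, hAh, hA⟩,
    isSchroderPath_iff.2 ⟨by omega, by omega, by simpa using hs.2.2.2⟩⟩

lemma IsSchroderPath.not_append_down_prefix {i : ℕ} {A X : List (Fin 3)} (hA : IsSchroderPath i A)
    (hX : StaysNonnegFrom 0 X) : ¬ A ++ [1] <+: X := by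
  rintro ⟨r, rfl⟩
  simp only [List.append_assoc, List.singleton_append, staysNonnegFrom_append,
    (isSchroderPath_iff.1 hA).2.1, staysNonnegFrom_cons] at hX
  exact absurd hX.2.2.nonneg (by norm_num)

lemma IsSchroderPath.append_down_inj {i i' : ℕ} {A A' B B' : List (Fin 3)}
    (hA : IsSchroderPath i A) (hA' : IsSchroderPath i' A') (h : A ++ 1 :: B = A' ++ 1 :: B') :
    A = A' ∧ B = B' := by
  wlog hlen : A.length ≤ A'.length generalizing i i' A A' B B'
  · obtain ⟨h₁, h₂⟩ := this hA' hA h.symm (by omega)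
    exact ⟨h₁.symm, h₂.symm⟩
  rcases hlen.lt_or_eq with hlt | heq
  · refine absurd (List.prefix_of_prefix_length_le ?_ (List.prefix_append A' (1 :: B')) ?_)
      (hA.not_append_down_prefix (isSchroderPath_iff.1 hA').2.2)
    · exact h ▸ ⟨B, by simp⟩
    · simpa using hlt
  · obtain ⟨rfl, hB⟩ := List.append_inj h heq
    exact ⟨rfl, List.cons_injective hB⟩

abbrev SchroderPaths (k : ℕ) := {l : List (Fin 3) // IsSchroderPath k l}

instance (k : ℕ) : Finite (SchroderPaths k) :=
  Set.Finite.to_subtype <| (List.finite_length_le (Fin 3) (2 * k)).subset fun l hl =>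
    (isSchroderPath_iff.1 hl).1 ▸ length_le_width l

namespace SchroderPaths

def assemble (k : ℕ) :
    SchroderPaths k ⊕ (Σ i : Fin (k + 1), SchroderPaths i × SchroderPaths (k - i)) →
      SchroderPaths (k + 1)
  | .inl t => ⟨2 :: t, isSchroderPath_cons_two.2 t.2⟩
  | .inr ⟨i, A, B⟩ => ⟨0 :: (A.1 ++ 1 :: B.1), by
      simpa [Nat.add_sub_cancel' (Nat.lt_succ_iff.1 i.2)] using A.2.up_append_down B.2⟩

lemma assemble_bijective (k : ℕ) : Function.Bijective (assemble k) := by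
  constructor
  · rintro (⟨t, ht⟩ | ⟨i, ⟨A, hA⟩, ⟨B, hB⟩⟩) (⟨t', ht'⟩ | ⟨i', ⟨A', hA'⟩, ⟨B', hB'⟩⟩) h <;>
      simp only [assemble, Subtype.mk.injEq, List.cons.injEq] at h
    · obtain ⟨-, rfl⟩ := h
      rfl
    · exact absurd h.1 (by decide)
    · exact absurd h.1 (by decide)
    · obtain ⟨rfl, rfl⟩ := hA.append_down_inj hA' h.2
      obtain rfl : i = i' := Fin.ext <| by
        have := (isSchroderPath_iff.1 hA).1
        have := (isSchroderPath_iff.1 hA').1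
        omega
      rfl
  · rintro ⟨l, hl⟩
    match l, hl with
    | [], hl => exact absurd (isSchroderPath_iff.1 hl).1 (by simp)
    | 0 :: t, hl =>
      obtain ⟨i, hik, A, B, rfl, hA, hB⟩ := hl.exists_eq_append_down
      exact ⟨.inr ⟨⟨i, by omega⟩, ⟨A, hA⟩, ⟨B, hB⟩⟩, rfl⟩
    | 1 :: t, hl => exact absurd hl (not_isSchroderPath_cons_one _ _)
    | 2 :: t, hl => exact ⟨.inl ⟨t, isSchroderPath_cons_two.1 hl⟩, rfl⟩

end SchroderPaths

lemma schroderNum_zero : schroderNum 0 = 1 := by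
  simp only [schroderNum, isSchroderPath_zero_iff, Nat.card_unique]

lemma schroderNum_succ (k : ℕ) : schroderNum (k + 1) =
    schroderNum k + ∑ i ∈ Finset.range (k + 1), schroderNum i * schroderNum (k - i) := by
  rw [schroderNum, ← Nat.card_eq_of_bijective _ (SchroderPaths.assemble_bijective k), Nat.card_sum,
    Nat.card_sigma, ← Fin.sum_univ_eq_sum_range]
  simp only [Nat.card_prod]
  rfl

/-- The large Schröder numbers begin `1, 2, 6, 22, 90` and
satisfy the recurrence `s_{k+1} = s_k + ∑_{i=0}^{k} s_i·s_{k−i}`. -/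
theorem stmt13 :
    schroderNum 0 = 1 ∧ schroderNum 1 = 2 ∧ schroderNum 2 = 6 ∧
    schroderNum 3 = 22 ∧ schroderNum 4 = 90 ∧
    ∀ k : ℕ, schroderNum (k + 1) =
      schroderNum k + ∑ i ∈ Finset.range (k + 1), schroderNum i * schroderNum (k - i) := by
  refine ⟨schroderNum_zero, ?_, ?_, ?_, ?_, schroderNum_succ⟩ <;>
    simp [schroderNum_succ, Finset.sum_range_succ, schroderNum_zero]
end

section
/- For a 4×4 matrix X (not necessarily symmetric) with x_{22} ≠ 0, x_{33} ≠ 0, x_{23} ≠ 0, and p_{23} ≠ 0, the entry x_{41} equals the sum of six Laurent monomials: a_{21}a_{32}a_{43}/(p_2p_3) + a_{31|2}a_{43}/(p_2p_3) + a_{21}a_{42|3}/(p_2p_3) + a_{31|2}a_{42|3}/(p_2p_3a_{32}) + a_{31|2}a_{42|3}/(p_{23}a_{32}) + a_{41|23}/p_{23}. -/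
/-!
Expanding `a₄₁|₂₃` along its first column gives `p₂₃ x₄₁` plus terms free of `x₄₁`, so
`a₄₁|₂₃ / p₂₃` accounts for `x₄₁` and the other five terms must cancel the rest. The two terms
with `a₃₂` in the denominator merge into one, because `p₂ p₃ + p₂₃ = x₂₃ x₃₂`; after that,
clearing the denominators `p₂ p₃ p₂₃` leaves a polynomial identity.
-/

theorem neg_det_submatrix_succ_castSucc {R : Type*} [CommRing R]
    (X : Matrix (Fin 4) (Fin 4) R) :
    -Matrix.det (Matrix.of fun a b : Fin 3 => X a.succ b.castSucc) =
      (X 1 2 * X 2 1 - X 1 1 * X 2 2) * X 3 0 + X 1 0 * (X 3 1 * X 2 2 - X 3 2 * X 2 1) +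
        X 2 0 * (X 1 1 * X 3 2 - X 1 2 * X 3 1) := by
  simp only [Matrix.det_fin_three, Matrix.of_apply, Fin.succ_zero_eq_one, Fin.succ_one_eq_two,
    Fin.reduceSucc, Fin.castSucc_zero, Fin.castSucc_one, Fin.reduceCastSucc]
  ring

theorem stmt16_general {F : Type*} [Field F] (X : Matrix (Fin 4) (Fin 4) F)
    (h2 : X 1 1 ≠ 0) (h3 : X 2 2 ≠ 0) (h32 : X 2 1 ≠ 0)
    (h23 : X 1 2 * X 2 1 - X 1 1 * X 2 2 ≠ 0) :
    let p2 : F := X 1 1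
    let p3 : F := X 2 2
    let p23 : F := X 1 2 * X 2 1 - X 1 1 * X 2 2
    let a21 : F := X 1 0
    let a32 : F := X 2 1
    let a43 : F := X 3 2
    let a312 : F := X 2 0 * X 1 1 - X 2 1 * X 1 0
    let a423 : F := X 3 1 * X 2 2 - X 3 2 * X 2 1
    let a4123 : F :=
      -Matrix.det (Matrix.of fun a b : Fin 3 => X (Fin.succ a) (Fin.castSucc b))
    X 3 0 = a21 * a32 * a43 / (p2 * p3) + a312 * a43 / (p2 * p3) +
      a21 * a423 / (p2 * p3) + a312 * a423 / (p2 * p3 * a32) +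
      a312 * a423 / (p23 * a32) + a4123 / p23 := by
  intro p2 p3 p23 a21 a32 a43 a312 a423 a4123
  have hp2 : p2 ≠ 0 := h2
  have hp3 : p3 ≠ 0 := h3
  have ha32 : a32 ≠ 0 := h32
  have hp23 : p23 ≠ 0 := h23
  have expand_a4123 :
      a4123 = p23 * X 3 0 + a21 * a423 + X 2 0 * (X 1 1 * X 3 2 - X 1 2 * X 3 1) := by
    simp only [a4123, neg_det_submatrix_succ_castSucc]
    ring
  have merge : a312 * a423 / (p2 * p3 * a32) + a312 * a423 / (p23 * a32) =
      a312 * a423 * X 1 2 / (p2 * p3 * p23) := by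
    field_simp
    simp only [p2, p3, p23, a32]
    ring
  rw [add_assoc _ (a312 * a423 / (p2 * p3 * a32)), merge, expand_a4123]
  field_simp
  simp only [p2, p3, p23, a21, a32, a43, a312, a423]
  ring

/-- Six-term Schröder path formula for the entry `x₄₁` of an
arbitrary (not necessarily symmetric) 4×4 matrix over a field (0-based
indices).  Signed minors: `p₂ = x₂₂`, `p₃ = x₃₃`, `p₂₃ = x₂₃x₃₂ − x₂₂x₃₃`,
`a₂₁ = x₂₁`, `a₃₂ = x₃₂`, `a₄₃ = x₄₃`, `a₃₁|₂ = x₃₁x₂₂ − x₃₂x₂₁`,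
`a₄₂|₃ = x₄₂x₃₃ − x₄₃x₃₂`, `a₄₁|₂₃ = (−1)·det` of the submatrix with rows
`{2,3,4}` and columns `{1,2,3}`. -/
theorem stmt16 {F : Type*} [Field F] (X : Matrix (Fin 4) (Fin 4) F)
    (h2 : X 1 1 ≠ 0) (h3 : X 2 2 ≠ 0) (h23' : X 1 2 ≠ 0) (h32 : X 2 1 ≠ 0)
    (h23 : X 1 2 * X 2 1 - X 1 1 * X 2 2 ≠ 0) :
    let p2 : F := X 1 1
    let p3 : F := X 2 2
    let p23 : F := X 1 2 * X 2 1 - X 1 1 * X 2 2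
    let a21 : F := X 1 0
    let a32 : F := X 2 1
    let a43 : F := X 3 2
    let a312 : F := X 2 0 * X 1 1 - X 2 1 * X 1 0
    let a423 : F := X 3 1 * X 2 2 - X 3 2 * X 2 1
    let a4123 : F :=
      -Matrix.det (Matrix.of fun a b : Fin 3 => X (Fin.succ a) (Fin.castSucc b))
    X 3 0 = a21 * a32 * a43 / (p2 * p3) + a312 * a43 / (p2 * p3) +
      a21 * a423 / (p2 * p3) + a312 * a423 / (p2 * p3 * a32) +
      a312 * a423 / (p23 * a32) + a4123 / p23 :=
  stmt16_general X h2 h3 h32 h23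
end

section
/- If Y is a 4×4 correlation matrix constructed via the substitution of Theorem 5.1 from parameters ρ_{12}, ρ_{23}, ρ_{34}, ρ_{13|2}, ρ_{24|3}, ρ_{14|23} ∈ (−1,1), then det(Y) = (1−ρ_{12}²)(1−ρ_{23}²)(1−ρ_{34}²)(1−ρ_{13|2}²)(1−ρ_{24|3}²)(1−ρ_{14|23}²). -/
/-!
Read the parameters as a D-vine of unit vectors `X₁, X₂, X₃, X₄`. With `u, v, w, s, t` the square
roots of `1 - ρ₁₂², 1 - ρ₂₃², 1 - ρ₃₄², 1 - ρ₁₃|₂², 1 - ρ₂₄|₃²`, the rows of `dVineFactor` are the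
coordinates of the `Xᵢ` in an orthonormal frame built from `X₂` and `X₃`, except that the last
axis carries the weight `1 - ρ₁₄|₂₃²` instead of its square root. So `Y = M D Mᵀ` with
`M = dVineFactor …` and `D = diag(1, 1, 1, 1 - ρ₁₄|₂₃²)`, whence
`det Y = (det M)² (1 - ρ₁₄|₂₃²) = (u v s w t)² (1 - ρ₁₄|₂₃²)`.
-/

open Matrix

theorem Matrix.det_mul_diagonal_mul_transpose {n R : Type*} [Fintype n] [DecidableEq n]
    [CommRing R] (M : Matrix n n R) (d : n → R) :
    (M * diagonal d * Mᵀ).det = M.det ^ 2 * ∏ i, d i := by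
  rw [det_mul, det_mul, det_diagonal, det_transpose]
  ring

theorem Real.sqrt_neg_mul_neg {a : ℝ} (b : ℝ) (ha : 0 ≤ a) : √(-a * -b) = √a * √b := by
  rw [neg_mul_neg, Real.sqrt_mul ha]

theorem one_sub_sq_pos_of_mem_Ioo {x : ℝ} (hx : x ∈ Set.Ioo (-1 : ℝ) 1) : 0 < 1 - x ^ 2 :=
  sub_pos.2 ((sq_lt_one_iff_abs_lt_one x).2 (abs_lt.2 hx))

section DVine

variable {R : Type*} [CommRing R] (ρ12 ρ23 ρ34 ρ132 ρ243 ρ1423 u v w s t : R)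

def dVineCorrelation : Matrix (Fin 4) (Fin 4) R :=
  let y13 := ρ12 * ρ23 - ρ132 * (u * v)
  let y24 := ρ23 * ρ34 - ρ243 * (v * w)
  let y14 := ρ12 * ρ23 * ρ34 - ρ12 * ρ243 * (v * w) - ρ132 * ρ34 * (u * v) -
    ρ132 * ρ23 * ρ243 * (u * w) + ρ1423 * (u * w * s * t)
  !![1, ρ12, y13, y14;
    ρ12, 1, ρ23, y24;
    y13, ρ23, 1, ρ34;
    y14, y24, ρ34, 1]

def dVineFactor : Matrix (Fin 4) (Fin 4) R :=
  !![ρ12, -ρ132 * u, u * s, 0;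
    1, 0, 0, 0;
    ρ23, v, 0, 0;
    ρ23 * ρ34 - ρ243 * (v * w), ρ34 * v + ρ23 * ρ243 * w, ρ1423 * w * t, w * t]

theorem det_dVineFactor :
    (dVineFactor ρ12 ρ23 ρ34 ρ132 ρ243 ρ1423 u v w s t).det = u * v * s * w * t := by
  rw [dVineFactor, det_succ_row _ 1, Fin.sum_univ_four]
  simp only [det_fin_three, submatrix_apply, of_apply]
  simp [Fin.succAbove]
  ring

variable {ρ12 ρ23 ρ34 ρ132 ρ243 ρ1423 u v w s t}

theorem dVineFactor_mul_diagonal_mul_transpose (hu : u ^ 2 = 1 - ρ12 ^ 2)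
    (hv : v ^ 2 = 1 - ρ23 ^ 2) (hw : w ^ 2 = 1 - ρ34 ^ 2) (hs : s ^ 2 = 1 - ρ132 ^ 2)
    (ht : t ^ 2 = 1 - ρ243 ^ 2) :
    dVineFactor ρ12 ρ23 ρ34 ρ132 ρ243 ρ1423 u v w s t * diagonal ![1, 1, 1, 1 - ρ1423 ^ 2] *
        (dVineFactor ρ12 ρ23 ρ34 ρ132 ρ243 ρ1423 u v w s t)ᵀ =
      dVineCorrelation ρ12 ρ23 ρ34 ρ132 ρ243 ρ1423 u v w s t := by
  ext i j
  fin_cases i <;> fin_cases j <;>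
    simp only [dVineCorrelation, dVineFactor, mul_apply, transpose_apply, Fin.sum_univ_four] <;>
    simp
  all_goals first
    | linear_combination
    | linear_combination hv
    | linear_combination ρ34 * hv
    | linear_combination u ^ 2 * hs + hu
    | linear_combination (ρ34 ^ 2 + ρ243 ^ 2 * w ^ 2) * hv + w ^ 2 * ht + hw

theorem det_dVineCorrelation (hu : u ^ 2 = 1 - ρ12 ^ 2) (hv : v ^ 2 = 1 - ρ23 ^ 2)
    (hw : w ^ 2 = 1 - ρ34 ^ 2) (hs : s ^ 2 = 1 - ρ132 ^ 2) (ht : t ^ 2 = 1 - ρ243 ^ 2) :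
    (dVineCorrelation ρ12 ρ23 ρ34 ρ132 ρ243 ρ1423 u v w s t).det =
      (1 - ρ12 ^ 2) * (1 - ρ23 ^ 2) * (1 - ρ34 ^ 2) *
      (1 - ρ132 ^ 2) * (1 - ρ243 ^ 2) * (1 - ρ1423 ^ 2) := by
  rw [← dVineFactor_mul_diagonal_mul_transpose hu hv hw hs ht,
    det_mul_diagonal_mul_transpose, det_dVineFactor, Fin.prod_univ_four, ← hu, ← hv, ← hw, ← hs,
    ← ht]
  simp
  ring

end DVine

theorem stmt19_general (ρ12 ρ23 ρ34 ρ132 ρ243 ρ1423 : ℝ)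
    (h12 : ρ12 ∈ Set.Ioo (-1 : ℝ) 1) (h23 : ρ23 ∈ Set.Ioo (-1 : ℝ) 1)
    (h34 : ρ34 ∈ Set.Ioo (-1 : ℝ) 1) (h132 : ρ132 ∈ Set.Ioo (-1 : ℝ) 1)
    (h243 : ρ243 ∈ Set.Ioo (-1 : ℝ) 1)
    (p12 p23 p34 p123 p234 a132 a243 a1423 y13 y24 y14 : ℝ)
    (hp12 : p12 = -(1 - ρ12 ^ 2))
    (hp23 : p23 = -(1 - ρ23 ^ 2))
    (hp34 : p34 = -(1 - ρ34 ^ 2))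
    (hp123 : p123 = -((1 - ρ12 ^ 2) * (1 - ρ23 ^ 2) * (1 - ρ132 ^ 2)))
    (hp234 : p234 = -((1 - ρ23 ^ 2) * (1 - ρ34 ^ 2) * (1 - ρ243 ^ 2)))
    (ha132 : a132 = -ρ132 * Real.sqrt (p12 * p23))
    (ha243 : a243 = -ρ243 * Real.sqrt (p23 * p34))
    (ha1423 : a1423 = -ρ1423 * Real.sqrt (p123 * p234))
    (hy13 : y13 = ρ12 * ρ23 + a132 / (1 * 1))
    (hy24 : y24 = ρ23 * ρ34 + a243 / (1 * 1))
    (hy14 : y14 = a1423 / p23 + ρ12 * a243 / (1 * 1) + a132 * ρ34 / (1 * 1) +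
      ρ12 * ρ23 * ρ34 / (1 * 1) + a132 * ρ23 * a243 / (1 * p23 * 1)) :
    (!![1, ρ12, y13, y14;
        ρ12, 1, ρ23, y24;
        y13, ρ23, 1, ρ34;
        y14, y24, ρ34, 1] : Matrix (Fin 4) (Fin 4) ℝ).det =
      (1 - ρ12 ^ 2) * (1 - ρ23 ^ 2) * (1 - ρ34 ^ 2) *
      (1 - ρ132 ^ 2) * (1 - ρ243 ^ 2) * (1 - ρ1423 ^ 2) := by
  have q12 := one_sub_sq_pos_of_mem_Ioo h12
  have q23 := one_sub_sq_pos_of_mem_Ioo h23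
  have q34 := one_sub_sq_pos_of_mem_Ioo h34
  have q132 := one_sub_sq_pos_of_mem_Ioo h132
  have q243 := one_sub_sq_pos_of_mem_Ioo h243
  set u := √(1 - ρ12 ^ 2)
  set v := √(1 - ρ23 ^ 2)
  set w := √(1 - ρ34 ^ 2)
  set s := √(1 - ρ132 ^ 2)
  set t := √(1 - ρ243 ^ 2)
  have hv : v ^ 2 = 1 - ρ23 ^ 2 := Real.sq_sqrt q23.le
  have hv0 : v ≠ 0 := (Real.sqrt_pos.2 q23).ne'
  have huv : √(p12 * p23) = u * v := by rw [hp12, hp23, Real.sqrt_neg_mul_neg _ q12.le]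
  have hvw : √(p23 * p34) = v * w := by rw [hp23, hp34, Real.sqrt_neg_mul_neg _ q23.le]
  have huvsvwt : √(p123 * p234) = u * v * s * (v * w * t) := by
    rw [hp123, hp234, Real.sqrt_neg_mul_neg _ (mul_pos (mul_pos q12 q23) q132).le,
      Real.sqrt_mul' _ q132.le, Real.sqrt_mul' _ q23.le, Real.sqrt_mul' _ q243.le, Real.sqrt_mul' _ q34.le]
  have hy13' : y13 = ρ12 * ρ23 - ρ132 * (u * v) := by rw [hy13, ha132, huv]; ring
  have hy24' : y24 = ρ23 * ρ34 - ρ243 * (v * w) := by rw [hy24, ha243, hvw]; ring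
  have hy14' : y14 = ρ12 * ρ23 * ρ34 - ρ12 * ρ243 * (v * w) - ρ132 * ρ34 * (u * v) -
      ρ132 * ρ23 * ρ243 * (u * w) + ρ1423 * (u * w * s * t) := by
    rw [hy14, ha1423, ha243, ha132, huvsvwt, hvw, huv, hp23, ← hv]
    field_simp
    ring
  rw [hy13', hy24', hy14']
  exact det_dVineCorrelation (Real.sq_sqrt q12.le) hv (Real.sq_sqrt q34.le)
    (Real.sq_sqrt q132.le) (Real.sq_sqrt q243.le)

/-- Let `Y` be the 4×4 correlation matrix obtained from
parameters `ρ₁₂, ρ₂₃, ρ₃₄, ρ₁₃|₂, ρ₂₄|₃, ρ₁₄|₂₃ ∈ (−1,1)` via the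
substitution of Theorem 5.1: the unit-diagonal symmetric matrix with
`y₁₂=ρ₁₂`, `y₂₃=ρ₂₃`, `y₃₄=ρ₃₄`,
`y₁₃ = ρ₁₂ρ₂₃ − ρ₁₃|₂·√((1−ρ₁₂²)(1−ρ₂₃²))`,
`y₂₄ = ρ₂₃ρ₃₄ − ρ₂₄|₃·√((1−ρ₂₃²)(1−ρ₃₄²))`, and `y₁₄` given by the five-term
Catalan path formula with `p₂ = p₃ = 1`, `p₂₃ = −(1−ρ₂₃²)`,
`a₁₂ = ρ₁₂`, `a₂₃ = ρ₂₃`, `a₃₄ = ρ₃₄`, `a₁₃|₂ = −ρ₁₃|₂√(p₁₂p₂₃)`,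
`a₂₄|₃ = −ρ₂₄|₃√(p₂₃p₃₄)`, `a₁₄|₂₃ = −ρ₁₄|₂₃√(p₁₂₃p₂₃₄)`, where
`p₁₂ = −(1−ρ₁₂²)`, `p₃₄ = −(1−ρ₃₄²)`,
`p₁₂₃ = −(1−ρ₁₂²)(1−ρ₂₃²)(1−ρ₁₃|₂²)`,
`p₂₃₄ = −(1−ρ₂₃²)(1−ρ₃₄²)(1−ρ₂₄|₃²)`.  Then
`det Y = (1−ρ₁₂²)(1−ρ₂₃²)(1−ρ₃₄²)(1−ρ₁₃|₂²)(1−ρ₂₄|₃²)(1−ρ₁₄|₂₃²)`. -/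
theorem stmt19 (ρ12 ρ23 ρ34 ρ132 ρ243 ρ1423 : ℝ)
    (h12 : ρ12 ∈ Set.Ioo (-1 : ℝ) 1) (h23 : ρ23 ∈ Set.Ioo (-1 : ℝ) 1)
    (h34 : ρ34 ∈ Set.Ioo (-1 : ℝ) 1) (h132 : ρ132 ∈ Set.Ioo (-1 : ℝ) 1)
    (h243 : ρ243 ∈ Set.Ioo (-1 : ℝ) 1) (h1423 : ρ1423 ∈ Set.Ioo (-1 : ℝ) 1)
    (p12 p23 p34 p123 p234 a132 a243 a1423 y13 y24 y14 : ℝ)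
    (hp12 : p12 = -(1 - ρ12 ^ 2))
    (hp23 : p23 = -(1 - ρ23 ^ 2))
    (hp34 : p34 = -(1 - ρ34 ^ 2))
    (hp123 : p123 = -((1 - ρ12 ^ 2) * (1 - ρ23 ^ 2) * (1 - ρ132 ^ 2)))
    (hp234 : p234 = -((1 - ρ23 ^ 2) * (1 - ρ34 ^ 2) * (1 - ρ243 ^ 2)))
    (ha132 : a132 = -ρ132 * Real.sqrt (p12 * p23))
    (ha243 : a243 = -ρ243 * Real.sqrt (p23 * p34))
    (ha1423 : a1423 = -ρ1423 * Real.sqrt (p123 * p234))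
    (hy13 : y13 = ρ12 * ρ23 + a132 / (1 * 1))
    (hy24 : y24 = ρ23 * ρ34 + a243 / (1 * 1))
    (hy14 : y14 = a1423 / p23 + ρ12 * a243 / (1 * 1) + a132 * ρ34 / (1 * 1) +
      ρ12 * ρ23 * ρ34 / (1 * 1) + a132 * ρ23 * a243 / (1 * p23 * 1)) :
    (!![1, ρ12, y13, y14;
        ρ12, 1, ρ23, y24;
        y13, ρ23, 1, ρ34;
        y14, y24, ρ34, 1] : Matrix (Fin 4) (Fin 4) ℝ).det =
      (1 - ρ12 ^ 2) * (1 - ρ23 ^ 2) * (1 - ρ34 ^ 2) *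
      (1 - ρ132 ^ 2) * (1 - ρ243 ^ 2) * (1 - ρ1423 ^ 2) :=
  stmt19_general ρ12 ρ23 ρ34 ρ132 ρ243 ρ1423 h12 h23 h34 h132 h243 p12 p23 p34 p123 p234 a132 a243
    a1423 y13 y24 y14 hp12 hp23 hp34 hp123 hp234 ha132 ha243 ha1423 hy13 hy24 hy14
end
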